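/- Let G and H be Polish groups and let ψ : G → H be a normal compression. If H is connected, then for all a, b ∈ G the commutator a·b·a⁻¹·b⁻¹ lies in the connected component of the identity of G; consequently the quotient of G by the connected component of the identity is abelian. -/

import Mathlib

/-!
For `h : H`, conjugation by `h` preserves the normal subgroup `ψ.range ≅ G` and so induces an
automorphism `α h` of `G`; it is a Borel map by the Lusin–Souslin theorem and therefore
continuous by Pettis's automatic continuity theorem.
For fixed `b : G` the orbit map `h ↦ α h b` is Borel, hence continuous on a comeagre set, and
since it intertwines left translation in `H` with the continuous maps `α t`, it is continuous
everywhere. As `H` is connected its range is connected; it contains `b = α 1 b` and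
`a * b * a⁻¹ = α (ψ a) b`.
-/
open Filter Topology Set Pointwise

theorem Set.Nonempty.of_residualEq_isOpen {X : Type*} [TopologicalSpace X] [BaireSpace X]
    {s u : Set X} (hsu : s =ᵇ u) (hu : IsOpen u) (hne : u.Nonempty) : s.Nonempty := by
  obtain ⟨x, hx, hxu⟩ := (dense_of_mem_residual hsu).exists_mem_open hu hne
  exact ⟨x, cast hx.symm hxu⟩

theorem BaireMeasurableSet.inv_mul_mem_nhds_one {G : Type*} [TopologicalSpace G] [Group G]
    [IsTopologicalGroup G] [BaireSpace G] {A : Set G} (hA : BaireMeasurableSet A)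
    (hA' : ¬IsMeagre A) : A⁻¹ * A ∈ 𝓝 1 := by
  obtain ⟨U, hUo, hAU⟩ := hA.residualEq_isOpen
  obtain ⟨u, hu⟩ : U.Nonempty := by
    refine nonempty_iff_ne_empty.2 fun hU => hA' ?_
    filter_upwards [hAU] with x hx hxA
    rw [hU] at hx
    exact cast hx hxA
  refine mem_of_superset
    (hUo.mul_left.mem_nhds ⟨u⁻¹, Set.inv_mem_inv.2 hu, u, hu, inv_mul_cancel u⟩) ?_
  rintro _ ⟨x, hx, y, hy, rfl⟩
  -- `A ∩ A * {x * y}` differs from the open set `U ∩ U * {x * y}`, which contains `y`, by a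
  -- meagre set
  have hshift : Tendsto (· * (x * y)⁻¹) (residual G) (residual G) :=
    tendsto_residual_of_isOpenMap (continuous_mul_const _) (isOpenMap_mul_right _)
  obtain ⟨b, hb, hb'⟩ : (A ∩ (· * (x * y)⁻¹) ⁻¹' A).Nonempty :=
    Nonempty.of_residualEq_isOpen (hAU.inter (hAU.comp_tendsto hshift))
      (hUo.inter (hUo.preimage (continuous_mul_const _)))
      ⟨y, hy, show y * (x * y)⁻¹ ∈ U by rwa [mul_inv_rev, mul_inv_cancel_left]⟩
  exact ⟨(b * (x * y)⁻¹)⁻¹, Set.inv_mem_inv.2 hb', b, hb, by group⟩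

theorem MonoidHom.continuous_of_measurable {G₁ G₂ : Type*}
    [Group G₁] [TopologicalSpace G₁] [IsTopologicalGroup G₁] [BaireSpace G₁]
    [MeasurableSpace G₁] [BorelSpace G₁]
    [Group G₂] [TopologicalSpace G₂] [IsTopologicalGroup G₂] [SecondCountableTopology G₂]
    [MeasurableSpace G₂] [OpensMeasurableSpace G₂]
    (f : G₁ →* G₂) (hf : Measurable f) : Continuous f := by
  refine continuous_of_continuousAt_one f ?_
  rw [ContinuousAt, map_one]
  intro U hU
  obtain ⟨V, hV, hVc, hVinv, hVU⟩ := exists_closed_nhds_one_inv_eq_mul_subset hU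
  obtain ⟨D, hDc, hDcover⟩ := TopologicalSpace.countable_cover_nhds (f := (· • V))
    fun y => (smul_mem_nhds_self (g := y)).2 hV
  obtain ⟨d, -, hd⟩ : ∃ d ∈ D, ¬IsMeagre (f ⁻¹' (d • V)) := by
    by_contra! h
    have : Countable D := hDc.to_subtype
    refine not_isMeagre_of_mem_residual (univ_mem (f := residual G₁)) ?_
    rw [← preimage_univ (f := f), ← hDcover, preimage_iUnion₂, biUnion_eq_iUnion]
    exact isMeagre_iUnion fun d => h d d.2
  refine mem_map.2 <| mem_of_superset
    ((hf (hVc.smul d).measurableSet).baireMeasurableSet.inv_mul_mem_nhds_one hd) ?_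
  rintro _ ⟨x, ⟨v, hv, hxv⟩, y, ⟨w, hw, hyw⟩, rfl⟩
  have hfxy : f (x * y) = v⁻¹ * w := by
    rw [map_mul, ← inv_inv x, map_inv, ← hxv, ← hyw]
    simp only [smul_eq_mul]
    group
  rw [mem_preimage, hfxy]
  exact hVU (mul_mem_mul (by rwa [← hVinv, Set.inv_mem_inv]) hw)

theorem Measurable.exists_mem_residual_continuousOn {X Y : Type*} [TopologicalSpace X]
    [MeasurableSpace X] [BorelSpace X] [TopologicalSpace Y] [SecondCountableTopology Y]
    [MeasurableSpace Y] [OpensMeasurableSpace Y] {f : X → Y} (hf : Measurable f) :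
    ∃ M ∈ residual X, ContinuousOn f M := by
  obtain ⟨B, hBc, -, hB⟩ := TopologicalSpace.exists_countable_basis Y
  choose! V hVo hfV using fun U (hU : U ∈ B) =>
    (hf (hB.isOpen hU).measurableSet).residualEq_isOpen
  refine ⟨⋂ U ∈ B, {x | (x ∈ f ⁻¹' U) = (x ∈ V U)}, (countable_bInter_mem hBc).2 hfV, ?_⟩
  intro x hx W hW
  obtain ⟨U, hUB, hxU, hUW⟩ := hB.mem_nhds_iff.1 hW
  refine mem_nhdsWithin.2 ⟨V U, hVo U hUB, cast (mem_iInter₂.1 hx U hUB) hxU, ?_⟩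
  rintro y ⟨hyV, hyM⟩
  exact hUW (cast (mem_iInter₂.1 hyM U hUB).symm hyV)

theorem continuous_of_continuousOn_residual_of_map_mul {H Y : Type*} [TopologicalSpace H]
    [Group H] [IsTopologicalGroup H] [BaireSpace H] [SequentialSpace H] [TopologicalSpace Y]
    {f : H → Y} {M : Set H} (hM : M ∈ residual H) (hfM : ContinuousOn f M)
    (β : H → Y → Y) (hβ : ∀ t, Continuous (β t)) (hf : ∀ t k, f (t * k) = β t (f k)) :
    Continuous f := by
  refine SeqContinuous.continuous fun {k k₀} hk => ?_
  have hshift : ∀ c : H, {t | t * c ∈ M} ∈ residual H := fun c =>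
    tendsto_residual_of_isOpenMap (continuous_mul_const c) (isOpenMap_mul_right c) hM
  -- countably many residual conditions: some `t` translates `k₀` and every `k n` into `M`
  obtain ⟨t, ht₀, htk⟩ : ({t | t * k₀ ∈ M} ∩ ⋂ n, {t | t * k n ∈ M}).Nonempty :=
    (dense_of_mem_residual
      (inter_mem (hshift k₀) (countable_iInter_mem.2 fun n => hshift (k n)))).nonempty
  have hlim : Tendsto (fun n => f (t * k n)) atTop (𝓝 (f (t * k₀))) :=
    (hfM _ ht₀).tendsto.comp
      (tendsto_nhdsWithin_iff.2 ⟨hk.const_mul t, .of_forall (mem_iInter.1 htk)⟩)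
  simpa [Function.comp_def, ← hf] using ((hβ t⁻¹).tendsto _).comp hlim

namespace MonoidHom

variable {G H : Type*} [Group G] [Group H] {ψ : G →* H}

noncomputable def conjPullback (hψi : Function.Injective ψ) [ψ.range.Normal] : H →* MulAut G :=
  (MulAut.congr (ofInjective hψi).symm).toMonoidHom.comp MulAut.conjNormal

theorem map_conjPullback_apply (hψi : Function.Injective ψ) [ψ.range.Normal] (h : H) (g : G) :
    ψ (conjPullback hψi h g) = h * ψ g * h⁻¹ := by
  simp [conjPullback, ofInjective_apply]

end MonoidHom

section Polish

variable {G H : Type*} [Group G] [TopologicalSpace G] [IsTopologicalGroup G] [PolishSpace G]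
  [Group H] [TopologicalSpace H] [IsTopologicalGroup H] [PolishSpace H]
  {ψ : G →* H}

theorem MonoidHom.continuous_conjPullback (hψc : Continuous ψ) (hψi : Function.Injective ψ)
    [ψ.range.Normal] (h : H) : Continuous (ψ.conjPullback hψi h) := by
  borelize G H
  refine MonoidHom.continuous_of_measurable (ψ.conjPullback hψi h).toMonoidHom ?_
  change Measurable (ψ.conjPullback hψi h)
  refine (hψc.measurableEmbedding hψi).measurable_comp_iff.1 ?_
  simpa only [Function.comp_def, ψ.map_conjPullback_apply hψi] using
    (by fun_prop : Continuous fun g => h * ψ g * h⁻¹).measurable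

theorem MonoidHom.continuous_conjPullback_apply (hψc : Continuous ψ)
    (hψi : Function.Injective ψ) [ψ.range.Normal] (g : G) :
    Continuous fun h => ψ.conjPullback hψi h g := by
  borelize G H
  have hmeas : Measurable fun h => ψ.conjPullback hψi h g := by
    refine (hψc.measurableEmbedding hψi).measurable_comp_iff.1 ?_
    simpa only [Function.comp_def, ψ.map_conjPullback_apply hψi] using
      (by fun_prop : Continuous fun h => h * ψ g * h⁻¹).measurable
  obtain ⟨M, hM, hMc⟩ := hmeas.exists_mem_residual_continuousOn
  exact continuous_of_continuousOn_residual_of_map_mul hM hMc (fun t => ψ.conjPullback hψi t)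
    (ψ.continuous_conjPullback hψc hψi) fun t k => by simp [MulAut.mul_apply]

theorem MonoidHom.commutator_mem_connectedComponent_one (hψc : Continuous ψ)
    (hψi : Function.Injective ψ) [ψ.range.Normal] [ConnectedSpace H] (a b : G) :
    a * b * a⁻¹ * b⁻¹ ∈ connectedComponent (1 : G) := by
  have hcont : Continuous fun h => ψ.conjPullback hψi h b * b⁻¹ :=
    (ψ.continuous_conjPullback_apply hψc hψi b).mul continuous_const
  have hconj : ψ.conjPullback hψi (ψ a) b = a * b * a⁻¹ :=
    hψi (by simp [ψ.map_conjPullback_apply hψi])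
  refine (isPreconnected_range hcont).subset_connectedComponent ⟨1, by simp⟩ ⟨ψ a, ?_⟩
  simp only [hconj]

end Polish

theorem stmt_10_general {G H : Type*}
    [Group G] [TopologicalSpace G] [IsTopologicalGroup G] [PolishSpace G]
    [Group H] [TopologicalSpace H] [IsTopologicalGroup H] [PolishSpace H]
    (ψ : G →* H) (hψc : Continuous ψ) (hψi : Function.Injective ψ)
    (hnorm : ψ.range.Normal)
    (hH : ConnectedSpace H) :
    (∀ a b : G, a * b * a⁻¹ * b⁻¹ ∈ connectedComponent (1 : G)) ∧
      (∀ a b : G,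
        QuotientGroup.mk (s := Subgroup.connectedComponentOfOne G) (a * b) =
          QuotientGroup.mk (s := Subgroup.connectedComponentOfOne G) (b * a)) := by
  have hcomm := ψ.commutator_mem_connectedComponent_one hψc hψi
  refine ⟨hcomm, fun a b => QuotientGroup.eq.2 ?_⟩
  have hba : (a * b)⁻¹ * (b * a) = b⁻¹ * a⁻¹ * b⁻¹⁻¹ * a⁻¹⁻¹ := by group
  exact hba ▸ hcomm b⁻¹ a⁻¹

/-- Let `G` and `H` be Polish groups and let `ψ : G → H` be a normal
compression. If `H` is connected, then for all `a, b ∈ G` the commutator `a·b·a⁻¹·b⁻¹`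
lies in the connected component of the identity of `G`; consequently the quotient of `G`
by the connected component of the identity is abelian (the cosets of `a·b` and `b·a`
coincide for all `a, b`). -/
theorem stmt_10 {G H : Type*}
    [Group G] [TopologicalSpace G] [IsTopologicalGroup G] [PolishSpace G]
    [Group H] [TopologicalSpace H] [IsTopologicalGroup H] [PolishSpace H]
    (ψ : G →* H) (hψc : Continuous ψ) (hψi : Function.Injective ψ)
    (hdense : DenseRange (⇑ψ)) (hnorm : ψ.range.Normal)
    (hH : ConnectedSpace H) :
    (∀ a b : G, a * b * a⁻¹ * b⁻¹ ∈ connectedComponent (1 : G)) ∧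
      (∀ a b : G,
        QuotientGroup.mk (s := Subgroup.connectedComponentOfOne G) (a * b) =
          QuotientGroup.mk (s := Subgroup.connectedComponentOfOne G) (b * a)) :=
  stmt_10_general ψ hψc hψi hnorm hH
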